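/- arXiv:0708.3956 — 2 statements merged into one kernel-verified Lean document; each statement's English description precedes it below -/
import Mathlib

section
/- For all A, B > 0, with a, b and h(x) = (2+A+B)/(2π(1−x²)) as for the varying Jacobi weight, the limit of n·(b_{n,n} − (a+b)/2) as n → ∞, where b_{n,n} = (B²−A²)/((2+A+B)(2+A+B+2/n)), equals (1/(2π(b−a)))·(1/h(b) − 1/h(a)). In other words, the explicit Jacobi formula verifies β₁ = (1/(2π(b−a)))(1/h(b) − 1/h(a)). -/
open Filter Topology

/-! Write `s = 2+A+B` and `K = B²-A²`; both sides equal `-2K/s³`. On the right, `1/h` is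
quadratic, so the divided difference collapses to `-(a+b)/s`, and `a+b = 2K/s²` is read off the
symmetric formulas for the endpoints. On the left, `b_{n,n}` is `t ↦ K/(s(s+t))` at `t = 2/n` and
`(a+b)/2` is its value at `t = 0`, so the limit is `2` times its derivative `-K/s³` at `0`. -/

theorem tendsto_nat_mul_div_mul_add_div_sub_div_sq {s : ℝ} (hs : s ≠ 0) (K c : ℝ) :
    Tendsto (fun n : ℕ => (n : ℝ) * (K / (s * (s + c / n)) - K / s ^ 2)) atTop
      (𝓝 (-(c * K) / s ^ 3)) := by
  have hshift : Tendsto (fun n : ℕ => s + c / n) atTop (𝓝 s) := by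
    simpa using tendsto_const_nhds.add (tendsto_const_div_atTop_nhds_zero_nat c)
  have heq : ∀ᶠ n : ℕ in atTop,
      -(c * K) / (s ^ 2 * (s + c / n)) = (n : ℝ) * (K / (s * (s + c / n)) - K / s ^ 2) := by
    filter_upwards [eventually_ne_atTop 0, hshift.eventually_ne hs] with n hn hshift_ne
    have hn' : (n : ℝ) ≠ 0 := Nat.cast_ne_zero.mpr hn
    -- with `c` expressed through `t`, `field_simp` can use `t ≠ 0`
    generalize hct : s + c / n = t at hshift_ne ⊢
    obtain rfl : c = (t - s) * n := by rw [← hct]; field_simp; ring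
    field_simp
    ring
  refine Tendsto.congr' heq ?_
  rw [pow_succ]
  exact tendsto_const_nhds.div (tendsto_const_nhds.mul hshift) (by positivity)

theorem divided_difference_inv_eq {s a b : ℝ} {h : ℝ → ℝ} (hab : a ≠ b)
    (hh : ∀ x : ℝ, h x = s / (2 * Real.pi * (1 - x ^ 2))) :
    1 / (2 * Real.pi * (b - a)) * (1 / h b - 1 / h a) = -(a + b) / s := by
  have hba : b - a ≠ 0 := sub_ne_zero.mpr hab.symm
  simp only [hh, one_div_div]
  field_simp [Real.pi_ne_zero]
  ring

/-- For varying Jacobi polynomials, with `b_{n,n} = (B²−A²)/((2+A+B)(2+A+B+2/n))`,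
the limit of `n (b_{n,n} − (a+b)/2)` as `n → ∞` equals
`(1/(2π(b−a)))(1/h(b) − 1/h(a))` where `h(x) = (2+A+B)/(2π(1−x²))`:
the explicit Jacobi formula verifies the value of `β₁`. -/
theorem jacobi_beta_one (A B : ℝ) (hA : 0 < A) (hB : 0 < B)
    (a b : ℝ) (h : ℝ → ℝ)
    (ha : a = (B ^ 2 - A ^ 2 - 4 * Real.sqrt ((1 + A + B) * (1 + A) * (1 + B))) /
      (2 + A + B) ^ 2)
    (hb : b = (B ^ 2 - A ^ 2 + 4 * Real.sqrt ((1 + A + B) * (1 + A) * (1 + B))) /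
      (2 + A + B) ^ 2)
    (hh : ∀ x : ℝ, h x = (2 + A + B) / (2 * Real.pi * (1 - x ^ 2))) :
    Tendsto
      (fun n : ℕ =>
        (n : ℝ) * ((B ^ 2 - A ^ 2) / ((2 + A + B) * (2 + A + B + 2 / (n : ℝ))) -
          (a + b) / 2))
      atTop
      (𝓝 (1 / (2 * Real.pi * (b - a)) * (1 / h b - 1 / h a))) := by
  have hs : (2 + A + B : ℝ) ≠ 0 := by positivity
  have hsum : a + b = 2 * (B ^ 2 - A ^ 2) / (2 + A + B) ^ 2 := by
    rw [ha, hb]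
    ring
  have hab : a < b := by
    rw [ha, hb]
    have hroot : 0 < Real.sqrt ((1 + A + B) * (1 + A) * (1 + B)) :=
      Real.sqrt_pos.mpr (by positivity)
    gcongr
    linarith
  rw [divided_difference_inv_eq hab.ne hh, hsum]
  convert tendsto_nat_mul_div_mul_add_div_sub_div_sq hs (B ^ 2 - A ^ 2) 2 using 2 <;> field_simp
end

section
/- Suppose a sequence (uₙ) of complex numbers has an asymptotic expansion uₙ ∼ iα + ∑_{m odd} pₘ/nᵐ − i∑_{m even, m≥2} qₘ/nᵐ and (vₙ) has vₙ ∼ −iα + ∑_{m odd} pₘ/nᵐ + i∑_{m even} qₘ/nᵐ, with α, pₘ, qₘ real. Then the product uₙvₙ has an asymptotic expansion in powers of 1/n containing only even powers: uₙvₙ ∼ α² + ∑_{m≥1} cₘ/n^{2m} for some real constants cₘ. -/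
/-!
Write the two expansions as formal power series `φ` and `ψ` in `X = 1/n`. Asymptotic expansions
multiply like power series, so `uₙvₙ` has the expansion `φψ`. The hypotheses say that
`ψ = φ̄` (coefficientwise conjugate) and `ψ(X) = -φ(-X)`. Hence `φψ = φφ̄` has real coefficients,
and `φψ` is invariant under `X ↦ -X`, so its odd coefficients vanish.
-/

open Complex Finset
open scoped Polynomial PowerSeries
open Asymptotics Filter

namespace PowerSeries

variable {R : Type*}

theorem eval_trunc_succ [CommSemiring R] (φ : R⟦X⟧) (y : R) (l : ℕ) :
    (trunc (l + 1) φ).eval y = coeff 0 φ + ∑ m ∈ Icc 1 l, coeff m φ * y ^ m := by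
  rw [← Polynomial.eval₂_id, eval₂_trunc_eq_sum_range, range_eq_Ico,
    sum_eq_sum_Ico_succ_bot (by omega : 0 < l + 1), Finset.Ico_add_one_right_eq_Icc]
  simp

theorem eval_trunc_of_coeff_odd_eq_zero [CommSemiring R] {φ : R⟦X⟧}
    (hφ : ∀ k, Odd k → coeff k φ = 0) (y : R) (l : ℕ) :
    (trunc (2 * l + 2) φ).eval y = coeff 0 φ + ∑ m ∈ Icc 1 l, coeff (2 * m) φ * y ^ (2 * m) := by
  induction l with
  | zero => simp [trunc_succ, hφ 1 odd_one]
  | succ l ih =>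
    rw [show 2 * (l + 1) + 2 = 2 * l + 2 + 1 + 1 by ring, trunc_succ, trunc_succ,
      hφ (2 * l + 2 + 1) ⟨l + 1, by ring⟩, Polynomial.eval_add, Polynomial.eval_add, ih,
      sum_Icc_succ_top (by omega)]
    simp [mul_add, add_assoc]

theorem X_pow_dvd_trunc_mul_trunc_sub_trunc_mul [CommRing R] (n : ℕ) (φ ψ : R⟦X⟧) :
    Polynomial.X ^ n ∣ trunc n φ * trunc n ψ - trunc n (φ * ψ) := by
  rw [Polynomial.X_pow_dvd_iff]
  intro d hd
  rw [Polynomial.coeff_sub, ← trunc_trunc_mul_trunc, coeff_trunc, if_pos hd,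
    ← Polynomial.coe_mul, Polynomial.coeff_coe, sub_self]

theorem coeff_mul_rescale_neg_one_self_of_odd [CommRing R] [NoZeroDivisors R] [CharZero R]
    (φ : R⟦X⟧) {k : ℕ} (hk : Odd k) : coeff k (φ * rescale (-1) φ) = 0 := by
  have hinv : rescale (-1) (φ * rescale (-1) φ) = φ * rescale (-1) φ := by
    rw [map_mul, rescale_rescale, neg_one_mul, neg_neg, rescale_one, RingHom.id_apply, mul_comm]
  have := congrArg (coeff k) hinv
  rw [coeff_rescale, hk.neg_one_pow, neg_one_mul] at this
  exact CharZero.eq_neg_self_iff.mp this.symm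

theorem ofReal_re_coeff_mul_map_conj_self (φ : ℂ⟦X⟧) (k : ℕ) :
    ((coeff k (φ * map (starRingEnd ℂ) φ)).re : ℂ) = coeff k (φ * map (starRingEnd ℂ) φ) := by
  have hconj : map (starRingEnd ℂ) (map (starRingEnd ℂ) φ) = φ := by ext; simp
  rw [← Complex.conj_eq_iff_re, ← coeff_map, map_mul, hconj, mul_comm]

theorem coeff_mul_map_conj_self_of_odd {φ : ℂ⟦X⟧}
    (hφ : rescale (-1) φ = -map (starRingEnd ℂ) φ) {k : ℕ} (hk : Odd k) :
    coeff k (φ * map (starRingEnd ℂ) φ) = 0 := by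
  rw [← neg_neg (map _ φ), ← hφ, mul_neg, map_neg, coeff_mul_rescale_neg_one_self_of_odd φ hk,
    neg_zero]

end PowerSeries

section

variable {α 𝕜 : Type*} [NormedField 𝕜] {l : Filter α} {x : α → 𝕜}

theorem Polynomial.isBigO_one_eval (P : 𝕜[X]) (hx : x =O[l] (fun _ ↦ (1 : 𝕜))) :
    (fun a ↦ P.eval (x a)) =O[l] (fun _ ↦ (1 : 𝕜)) := by
  induction P using Polynomial.induction_on with
  | C c => simpa using isBigO_const_const c (one_ne_zero : (1 : 𝕜) ≠ 0) l
  | add P Q hP hQ => simpa using hP.add hQ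
  | monomial n c _ =>
    simpa using (isBigO_const_const c (one_ne_zero : (1 : 𝕜) ≠ 0) l).mul (hx.pow (n + 1))

def HasAsymptoticExpansion (u : α → 𝕜) (φ : 𝕜⟦X⟧) (x : α → 𝕜) (l : Filter α) : Prop :=
  ∀ k : ℕ, (fun a ↦ u a - (PowerSeries.trunc (k + 1) φ).eval (x a)) =O[l] fun a ↦ x a ^ (k + 1)

namespace HasAsymptoticExpansion

variable {u v : α → 𝕜} {φ ψ : 𝕜⟦X⟧}

theorem isBigO_one (hu : HasAsymptoticExpansion u φ x l) (hx : x =O[l] (fun _ ↦ (1 : 𝕜))) :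
    u =O[l] (fun _ ↦ (1 : 𝕜)) := by
  have h := ((hu 0).trans (by simpa using hx)).add ((PowerSeries.trunc 1 φ).isBigO_one_eval hx)
  simpa using h

theorem mul (hu : HasAsymptoticExpansion u φ x l) (hv : HasAsymptoticExpansion v ψ x l)
    (hx : x =O[l] (fun _ ↦ (1 : 𝕜))) : HasAsymptoticExpansion (u * v) (φ * ψ) x l := by
  intro k
  set P := PowerSeries.trunc (k + 1) φ
  set Q := PowerSeries.trunc (k + 1) ψ
  obtain ⟨R, hR⟩ := PowerSeries.X_pow_dvd_trunc_mul_trunc_sub_trunc_mul (k + 1) φ ψ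
  have hsplit : ∀ a, u a * v a - (PowerSeries.trunc (k + 1) (φ * ψ)).eval (x a) =
      (u a - P.eval (x a)) * v a + P.eval (x a) * (v a - Q.eval (x a)) +
        x a ^ (k + 1) * R.eval (x a) := by
    intro a
    have := congrArg (Polynomial.eval (x a)) hR
    simp only [Polynomial.eval_sub, Polynomial.eval_mul, Polynomial.eval_pow,
      Polynomial.eval_X] at this
    linear_combination this
  simp only [Pi.mul_apply, hsplit]
  refine ((((hu k).mul (hv.isBigO_one hx)).add ?_).add ?_).congr_right (fun _ ↦ mul_one _)
  · simpa [mul_comm] using (P.isBigO_one_eval hx).mul (hv k)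
  · exact (isBigO_refl _ _).mul (R.isBigO_one_eval hx)

end HasAsymptoticExpansion

end

theorem isBigO_inv_natCast_pow_iff {e : ℕ → ℂ} {k : ℕ} :
    e =O[𝓟 (Set.Ici 1)] (fun n ↦ ((n : ℂ)⁻¹) ^ k) ↔
      ∃ C : ℝ, ∀ n : ℕ, 1 ≤ n → ‖e n‖ ≤ C / (n : ℝ) ^ k := by
  simp [isBigO_principal, div_eq_mul_inv]

theorem isBigO_inv_natCast_one :
    (fun n : ℕ ↦ (n : ℂ)⁻¹) =O[𝓟 (Set.Ici 1)] (fun _ ↦ (1 : ℂ)) := by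
  refine isBigO_principal.mpr ⟨1, fun n (hn : 1 ≤ n) ↦ ?_⟩
  simpa using inv_le_one_of_one_le₀ (Nat.one_le_cast.mpr hn)

theorem hasAsymptoticExpansion_inv_natCast_of_bound {u : ℕ → ℂ} {c₀ : ℂ} {a : ℕ → ℂ}
    (h : ∀ l : ℕ, ∃ C : ℝ, ∀ n : ℕ, 1 ≤ n →
      ‖u n - (c₀ + ∑ m ∈ Icc 1 l, a m / (n : ℂ) ^ m)‖ ≤ C / (n : ℝ) ^ (l + 1)) :
    HasAsymptoticExpansion u (PowerSeries.mk fun m ↦ if m = 0 then c₀ else a m)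
      (fun n ↦ (n : ℂ)⁻¹) (𝓟 (Set.Ici 1)) := by
  intro l
  obtain ⟨C, hC⟩ := h l
  refine isBigO_inv_natCast_pow_iff.mpr ⟨C, fun n hn ↦ ?_⟩
  convert hC n hn using 4
  rw [PowerSeries.eval_trunc_succ]
  congr 1
  · simp
  · refine sum_congr rfl fun m hm ↦ ?_
    simp [Nat.one_le_iff_ne_zero.mp (mem_Icc.mp hm).1, div_eq_mul_inv]

noncomputable def expansionSeries (α : ℝ) (p q : ℕ → ℝ) : ℂ⟦X⟧ :=
  PowerSeries.mk fun m ↦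
    if m = 0 then I * α else if Odd m then ((p m : ℝ) : ℂ) else -(I * ((q m : ℝ) : ℂ))

theorem map_conj_expansionSeries (α : ℝ) (p q : ℕ → ℝ) :
    PowerSeries.map (starRingEnd ℂ) (expansionSeries α p q) = PowerSeries.mk fun m ↦
      if m = 0 then -(I * α) else if Odd m then ((p m : ℝ) : ℂ) else I * ((q m : ℝ) : ℂ) := by
  ext m
  rcases eq_or_ne m 0 with rfl | hm
  · simp [expansionSeries]
  · by_cases hodd : Odd m <;> simp [expansionSeries, hm, hodd]

theorem rescale_neg_one_expansionSeries (α : ℝ) (p q : ℕ → ℝ) :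
    PowerSeries.rescale (-1) (expansionSeries α p q) =
      -PowerSeries.map (starRingEnd ℂ) (expansionSeries α p q) := by
  ext m
  rw [map_neg, PowerSeries.coeff_rescale, map_conj_expansionSeries]
  rcases eq_or_ne m 0 with rfl | hm
  · simp [expansionSeries]
  · rcases Nat.even_or_odd m with heven | hodd
    · simp [expansionSeries, hm, heven.neg_one_pow, Nat.not_odd_iff_even.mpr heven]
    · simp [expansionSeries, hm, hodd.neg_one_pow, hodd]

/-- If `uₙ ∼ iα + ∑_{m odd} pₘ/nᵐ − i ∑_{m even} qₘ/nᵐ` and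
`vₙ ∼ −iα + ∑_{m odd} pₘ/nᵐ + i ∑_{m even} qₘ/nᵐ` with `α, pₘ, qₘ` real, then
`uₙvₙ` has an asymptotic expansion containing only even powers of `1/n`:
`uₙvₙ ∼ α² + ∑_{m≥1} cₘ/n^{2m}` for some real constants `cₘ`. -/
theorem product_even_expansion (α : ℝ) (p q : ℕ → ℝ) (u v : ℕ → ℂ)
    (hu : ∀ l : ℕ, ∃ C : ℝ, ∀ n : ℕ, 1 ≤ n →
      ‖(u n - (I * (α : ℂ) +
        ∑ m ∈ Finset.Icc 1 l,
          (if Odd m then ((p m : ℝ) : ℂ) else -(I * ((q m : ℝ) : ℂ))) / (n : ℂ) ^ m))‖ ≤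
        C / (n : ℝ) ^ (l + 1))
    (hv : ∀ l : ℕ, ∃ C : ℝ, ∀ n : ℕ, 1 ≤ n →
      ‖(v n - (-(I * (α : ℂ)) +
        ∑ m ∈ Finset.Icc 1 l,
          (if Odd m then ((p m : ℝ) : ℂ) else I * ((q m : ℝ) : ℂ)) / (n : ℂ) ^ m))‖ ≤
        C / (n : ℝ) ^ (l + 1)) :
    ∃ c : ℕ → ℝ, ∀ l : ℕ, ∃ C : ℝ, ∀ n : ℕ, 1 ≤ n →
      ‖(u n * v n - (((α : ℂ) ^ 2) +
        ∑ m ∈ Finset.Icc 1 l, ((c m : ℝ) : ℂ) / (n : ℂ) ^ (2 * m)))‖ ≤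
      C / (n : ℝ) ^ (2 * l + 2) := by
  set φ := expansionSeries α p q
  set χ := φ * PowerSeries.map (starRingEnd ℂ) φ
  have hu' : HasAsymptoticExpansion u φ _ _ := hasAsymptoticExpansion_inv_natCast_of_bound hu
  have hv' : HasAsymptoticExpansion v (PowerSeries.map (starRingEnd ℂ) φ) _ _ :=
    map_conj_expansionSeries α p q ▸ hasAsymptoticExpansion_inv_natCast_of_bound hv
  have hodd : ∀ k, Odd k → PowerSeries.coeff k χ = 0 := fun _ ↦
    PowerSeries.coeff_mul_map_conj_self_of_odd (rescale_neg_one_expansionSeries α p q)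
  have hconst : PowerSeries.coeff 0 χ = (α : ℂ) ^ 2 := by
    simp only [χ, φ, map_conj_expansionSeries]
    simp [expansionSeries]
    linear_combination (-(α : ℂ) ^ 2) * I_sq
  refine ⟨fun m ↦ (PowerSeries.coeff (2 * m) χ).re, fun l ↦ ?_⟩
  have heval : ∀ n : ℕ, (PowerSeries.trunc (2 * l + 2) χ).eval (n : ℂ)⁻¹ =
      (α : ℂ) ^ 2 + ∑ m ∈ Icc 1 l, ((PowerSeries.coeff (2 * m) χ).re : ℂ) / (n : ℂ) ^ (2 * m) := by
    intro n
    rw [PowerSeries.eval_trunc_of_coeff_odd_eq_zero hodd, hconst]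
    simp only [χ, PowerSeries.ofReal_re_coeff_mul_map_conj_self, div_eq_mul_inv, inv_pow]
  obtain ⟨C, hC⟩ :=
    isBigO_inv_natCast_pow_iff.mp (hu'.mul hv' isBigO_inv_natCast_one (2 * l + 1))
  exact ⟨C, fun n hn ↦ heval n ▸ hC n hn⟩
end
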